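/- arXiv:2505.14371 — 4 statements merged into one kernel-verified Lean document; each statement's English description precedes it below -/
import Mathlib

section
/- Let d ≥ 1, let q ≥ 1 be an integer, and let v ∈ ℝ^d be nonzero with normalized coordinates u_i = |v_i|/‖v‖_q ∈ [0,1]. Suppose the index set {1,…,d} is partitioned into M types, and for each type m there is a sequence of quantization levels 0 = ℓ^m_0 < ℓ^m_1 < ⋯ < ℓ^m_{α_m} < ℓ^m_{α_m+1} = 1. For each coordinate i of type m, let τ^m(u_i) be an index with ℓ^m_{τ^m(u_i)} ≤ u_i ≤ ℓ^m_{τ^m(u_i)+1}. Define ℓ̄^m = max_{1≤j≤α_m} ℓ^m_{j+1}/ℓ^m_j, ℓ̄ = max_{1≤m≤M} ℓ̄^m, ℓ̄₁ = max_{1≤m≤M} ℓ^m_1, and d_th = (2/ℓ̄₁)^{min(2,q)}. Then ‖v‖_q² · Σ_{m=1}^M Σ_{i of type m} (ℓ^m_{τ^m(u_i)+1} − u_i)(u_i − ℓ^m_{τ^m(u_i)}) ≤ ε_Q ‖v‖₂², where ε_Q = (ℓ̄−1)²/(4ℓ̄) + (ℓ̄₁ d^{1/min(q,2)} − 1)·𝟙[d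 ≥ d_th] + (ℓ̄₁²/4) d^{2/min(q,2)}·𝟙[d < d_th]. -/
/-!
Normalise to `uᵢ = |vᵢ| / ‖v‖_q`, so `∑ uᵢ^q = 1` and `‖v‖₂² = ‖v‖_q² ∑ uᵢ²`. On a cell
`[ℓ_τ, ℓ_{τ+1}]` with `τ ≥ 1` we have `ℓ_{τ+1} ≤ ℓ̄ ℓ_τ`, and then AM–GM bounds the error by
`(ℓ̄ - 1)²/(4ℓ̄) uᵢ²`. A coordinate in the first cell `[0, ℓ₁]` has error at most `(ℓ̄₁ - uᵢ) uᵢ`.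
With `p = min q 2`, the norm comparison `∑ uᵢ² ≥ d^{1-2/p}` bounds the sum of these first-cell
errors in two ways: by `d ℓ̄₁²/4 ≤ (ℓ̄₁²/4) d^{2/p} ∑ uᵢ²` coordinatewise, and, once
`x = ℓ̄₁ d^{1/p} ≥ 2`, by `(x - 1) ∑ uᵢ²` through Cauchy–Schwarz on the first-cell coordinates.
-/

open Finset

theorem pos_of_zero_of_lt_succ {f : ℕ → ℝ} {n : ℕ} (h0 : f 0 = 0)
    (hmono : ∀ k ≤ n, f k < f (k + 1)) {j : ℕ} (hj0 : 0 < j) (hjn : j ≤ n + 1) : 0 < f j :=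
  h0 ▸ strictMonoOn_Iic_of_lt_succ (fun k hk => hmono k (by omega))
    (Set.mem_Iic.2 (Nat.zero_le _)) (Set.mem_Iic.2 hjn) hj0

-- `(b - u)(u - a) ≤ (La - u)(u - a)` and `4L (La - u)(u - a) = (L - 1)²u² - ((L + 1)u - 2La)²`.
theorem sub_mul_sub_le_of_le_mul {a b u L : ℝ} (hau : a ≤ u) (hbL : b ≤ L * a)
    (hL : 1 ≤ L) : (b - u) * (u - a) ≤ (L - 1) ^ 2 / (4 * L) * u ^ 2 := by
  have hL0 : 0 < L := by linarith
  rw [div_mul_eq_mul_div, le_div_iff₀ (by positivity)]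
  nlinarith [sq_nonneg ((L + 1) * u - 2 * L * a),
    mul_nonneg (mul_nonneg hL0.le (sub_nonneg.2 hbL)) (sub_nonneg.2 hau)]

theorem sub_mul_sub_le_of_div_le {f : ℕ → ℝ} {n : ℕ} (h0 : f 0 = 0)
    (hmono : ∀ k ≤ n, f k < f (k + 1)) {L : ℝ} (hL : 1 ≤ L)
    (hratio : ∀ k ∈ Set.Icc 1 n, f (k + 1) / f k ≤ L) {j : ℕ} (hj : j ∈ Set.Icc 1 n) {u : ℝ}
    (hu : f j ≤ u) :
    (f (j + 1) - u) * (u - f j) ≤ (L - 1) ^ 2 / (4 * L) * u ^ 2 := by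
  have hfj : 0 < f j := pos_of_zero_of_lt_succ h0 hmono hj.1 (by have := hj.2; omega)
  exact sub_mul_sub_le_of_le_mul hu ((div_le_iff₀ hfj).1 (hratio j hj)) hL

theorem le_mul_add_sub_one_mul_of_sq_le {x c y s₀ s₁ : ℝ} (hx : 2 ≤ x) (hc : 0 < c)
    (hs₀ : 0 ≤ s₀) (hs₁ : 0 ≤ s₁) (hcs : c ≤ s₀ + s₁) (hy : 0 ≤ y)
    (hy2 : y ^ 2 ≤ x ^ 2 * c * s₀) : y ≤ x * s₀ + (x - 1) * s₁ := by
  rcases le_total c s₀ with h | h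
  · have : y ≤ x * s₀ :=
      (pow_le_pow_iff_left₀ hy (by positivity) two_ne_zero).1 (by nlinarith)
    nlinarith
  · have hc' : c ≤ (x - 1) ^ 2 * c :=
      le_mul_of_one_le_left hc.le (by nlinarith)
    -- `(s₀ + (x - 1)c)² - x²cs₀ = (c - s₀)((x - 1)²c - s₀)`
    have : y ≤ s₀ + (x - 1) * c :=
      (pow_le_pow_iff_left₀ hy (by nlinarith) two_ne_zero).1
        (by nlinarith [mul_nonneg (sub_nonneg.2 h) (by linarith : 0 ≤ (x - 1) ^ 2 * c - s₀)])
    nlinarith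

section NormalizedVector

variable {ι : Type*} [Fintype ι] {u : ι → ℝ}

theorem card_pos_of_sum_pow_eq_one {q : ℕ} (hsum : ∑ i, u i ^ q = 1) :
    0 < Fintype.card ι := by
  by_contra! h
  rw [Nat.le_zero, Fintype.card_eq_zero_iff] at h
  simp at hsum

theorem rpow_one_sub_two_div_le_sum_sq (hu : ∀ i, 0 ≤ u i) {q : ℕ} (hq : 1 ≤ q)
    (hsum : ∑ i, u i ^ q = 1) :
    (Fintype.card ι : ℝ) ^ (1 - 2 / ((min q 2 : ℕ) : ℝ)) ≤ ∑ i, u i ^ 2 := by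
  rcases hq.eq_or_lt with rfl | hq2
  · have hd : (0 : ℝ) < Fintype.card ι := by exact_mod_cast card_pos_of_sum_pow_eq_one hsum
    have hcs := sq_sum_le_card_mul_sum_sq (s := univ) (f := u)
    simp only [pow_one] at hsum
    rw [hsum, one_pow, card_univ] at hcs
    norm_num [Real.rpow_neg_one, inv_le_iff_one_le_mul₀' hd, hcs]
  · have hu1 : ∀ i, u i ≤ 1 := fun i =>
      (pow_le_one_iff_of_nonneg (hu i) (by omega)).1
        (hsum ▸ single_le_sum (fun j _ => pow_nonneg (hu j) q) (mem_univ i))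
    rw [min_eq_right hq2, Nat.cast_ofNat, div_self two_ne_zero, sub_self, Real.rpow_zero,
      ← hsum]
    exact sum_le_sum fun i _ => pow_le_pow_of_le_one (hu i) (hu1 i) hq2

variable {c ℓ : ℝ} (Z : Finset ι)

theorem sum_sub_mul_le_of_card_le_mul (hcS : c ≤ ∑ i, u i ^ 2) {E : ℝ} (hE : 0 ≤ E)
    (hEc : E * c = Fintype.card ι) :
    ∑ i ∈ Z, (ℓ - u i) * u i ≤ ℓ ^ 2 / 4 * E * ∑ i, u i ^ 2 :=
  calc ∑ i ∈ Z, (ℓ - u i) * u i ≤ #Z • (ℓ ^ 2 / 4) :=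
        sum_le_card_nsmul _ _ _ fun i _ => by nlinarith [sq_nonneg (ℓ - 2 * u i)]
    _ ≤ Fintype.card ι * (ℓ ^ 2 / 4) := by
        rw [nsmul_eq_mul]; gcongr; exact_mod_cast Z.card_le_univ
    _ ≤ ℓ ^ 2 / 4 * E * ∑ i, u i ^ 2 := by
        rw [← hEc]; nlinarith [mul_le_mul_of_nonneg_left hcS hE, sq_nonneg ℓ]

theorem sum_sub_mul_le_of_two_le [DecidableEq ι] (hu : ∀ i, 0 ≤ u i) (hℓ : 0 ≤ ℓ) (hc : 0 < c)
    (hcS : c ≤ ∑ i, u i ^ 2) {x : ℝ} (hx : 2 ≤ x) (hxc : x ^ 2 * c = ℓ ^ 2 * Fintype.card ι) :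
    ∑ i ∈ Z, (ℓ - u i) * u i ≤ (x - 1) * ∑ i, u i ^ 2 := by
  have hsplit := sum_add_sum_compl Z fun i => u i ^ 2
  have hcs : (∑ i ∈ Z, u i) ^ 2 ≤ Fintype.card ι * ∑ i ∈ Z, u i ^ 2 :=
    sq_sum_le_card_mul_sum_sq.trans (mul_le_mul_of_nonneg_right
      (by exact_mod_cast Z.card_le_univ) (sum_nonneg fun i _ => sq_nonneg (u i)))
  have key := le_mul_add_sub_one_mul_of_sq_le (y := ℓ * ∑ i ∈ Z, u i) hx hc
    (sum_nonneg fun i _ => sq_nonneg (u i)) (sum_nonneg fun i _ => sq_nonneg (u i))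
    (hsplit ▸ hcS) (mul_nonneg hℓ (sum_nonneg fun i _ => hu i : (0 : ℝ) ≤ ∑ i ∈ Z, u i))
    (by rw [mul_pow, hxc]; nlinarith [mul_le_mul_of_nonneg_left hcs (sq_nonneg ℓ)])
  have hexpand : ∑ i ∈ Z, (ℓ - u i) * u i = ℓ * ∑ i ∈ Z, u i - ∑ i ∈ Z, u i ^ 2 := by
    simp only [sub_mul, sum_sub_distrib, mul_sum, sq]
  rw [hexpand, ← hsplit]
  linarith

theorem sum_sub_mul_le_of_sum_pow_eq_one [DecidableEq ι] (hu : ∀ i, 0 ≤ u i) {q : ℕ}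
    (hq : 1 ≤ q) (hsum : ∑ i, u i ^ q = 1) (hℓ : 0 < ℓ) :
    ∑ i ∈ Z, (ℓ - u i) * u i ≤
      ((ℓ * (Fintype.card ι : ℝ) ^ ((1 : ℝ) / ((min q 2 : ℕ) : ℝ)) - 1)
          * (if (2 / ℓ) ^ (min 2 q) ≤ (Fintype.card ι : ℝ) then 1 else 0)
        + ℓ ^ 2 / 4 * (Fintype.card ι : ℝ) ^ ((2 : ℝ) / ((min q 2 : ℕ) : ℝ))
          * (if (Fintype.card ι : ℝ) < (2 / ℓ) ^ (min 2 q) then 1 else 0))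
        * ∑ i, u i ^ 2 := by
  have hcS := rpow_one_sub_two_div_le_sum_sq hu hq hsum
  have hd : (0 : ℝ) < Fintype.card ι := by exact_mod_cast card_pos_of_sum_pow_eq_one hsum
  set d : ℝ := (Fintype.card ι : ℝ)
  set p : ℕ := min q 2
  have hp : p ≠ 0 := by omega
  have hdc : ∀ a : ℝ, d ^ a * d ^ (1 - a) = d := fun a => by
    rw [← Real.rpow_add hd, add_sub_cancel, Real.rpow_one]
  rcases le_or_gt ((2 / ℓ) ^ (min 2 q)) d with h | h
  · rw [if_pos h, if_neg h.not_gt, mul_zero, add_zero, mul_one]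
    refine sum_sub_mul_le_of_two_le Z hu hℓ.le (Real.rpow_pos_of_pos hd _) hcS ?_ ?_
    · have : 2 / ℓ ≤ d ^ ((1 : ℝ) / p) := by
        rw [min_comm] at h
        calc 2 / ℓ = ((2 / ℓ) ^ p) ^ ((p : ℝ)⁻¹) :=
              (Real.pow_rpow_inv_natCast (by positivity) hp).symm
          _ ≤ d ^ ((1 : ℝ) / p) := by
              rw [one_div]; exact Real.rpow_le_rpow (by positivity) h (by positivity)
      rwa [div_le_iff₀ hℓ, mul_comm] at this
    · rw [mul_pow, ← Real.rpow_natCast (d ^ _), ← Real.rpow_mul hd.le, mul_assoc, Nat.cast_ofNat,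
        one_div_mul_eq_div, hdc]
  · rw [if_neg h.not_ge, if_pos h, mul_zero, zero_add, mul_one]
    exact sum_sub_mul_le_of_card_le_mul Z hcS (by positivity) (hdc _)

end NormalizedVector

theorem rpow_pos_and_sum_div_pow_eq_one {ι : Type*} [Fintype ι] {v : ι → ℝ} (hv : v ≠ 0)
    {q : ℕ} (hq : q ≠ 0) :
    0 < (∑ j, |v j| ^ q) ^ ((1 : ℝ) / q) ∧
      ∑ i, (|v i| / (∑ j, |v j| ^ q) ^ ((1 : ℝ) / q)) ^ q = 1 := by
  obtain ⟨j, hj⟩ := Function.ne_iff.1 hv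
  have hX : 0 < ∑ j, |v j| ^ q :=
    sum_pos' (fun i _ => by positivity) ⟨j, mem_univ j, pow_pos (abs_pos.2 hj) q⟩
  refine ⟨Real.rpow_pos_of_pos hX _, ?_⟩
  simp_rw [div_pow, one_div, Real.rpow_inv_natCast_pow hX.le hq, ← sum_div, div_self hX.ne']

theorem sum_cell_errors_le {ι κ : Type*} [Fintype ι] [DecidableEq ι] {u : ι → ℝ}
    (hu : ∀ i, 0 ≤ u i) {q : ℕ} (hq : 1 ≤ q) (hsum : ∑ i, u i ^ q = 1) (typeOf : ι → κ)
    (α : κ → ℕ) (lev : κ → ℕ → ℝ) (hlev0 : ∀ m, lev m 0 = 0)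
    (hlevmono : ∀ m, ∀ j ≤ α m, lev m j < lev m (j + 1)) (τ : ι → ℕ)
    (hτle : ∀ i, τ i ≤ α (typeOf i)) (hτ : ∀ i, lev (typeOf i) (τ i) ≤ u i)
    {lbar : κ → ℝ}
    (hlbar : ∀ m, IsGreatest ((fun j => lev m (j + 1) / lev m j) '' Set.Icc 1 (α m)) (lbar m))
    {lbarAll lbar1 : ℝ} (hlbarAll : IsGreatest (Set.range lbar) lbarAll)
    (hlbar1 : IsGreatest (Set.range fun m => lev m 1) lbar1) :
    ∑ i, (lev (typeOf i) (τ i + 1) - u i) * (u i - lev (typeOf i) (τ i)) ≤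
      ((lbarAll - 1) ^ 2 / (4 * lbarAll)
        + (lbar1 * (Fintype.card ι : ℝ) ^ ((1 : ℝ) / ((min q 2 : ℕ) : ℝ)) - 1)
          * (if (2 / lbar1) ^ (min 2 q) ≤ (Fintype.card ι : ℝ) then 1 else 0)
        + lbar1 ^ 2 / 4 * (Fintype.card ι : ℝ) ^ ((2 : ℝ) / ((min q 2 : ℕ) : ℝ))
          * (if (Fintype.card ι : ℝ) < (2 / lbar1) ^ (min 2 q) then 1 else 0))
        * ∑ i, u i ^ 2 := by
  have hratio : ∀ m, ∀ k ∈ Set.Icc 1 (α m), lev m (k + 1) / lev m k ≤ lbarAll :=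
    fun m k hk => ((hlbar m).2 ⟨k, hk, rfl⟩).trans (hlbarAll.2 ⟨m, rfl⟩)
  have hL : 1 ≤ lbarAll := by
    obtain ⟨m, rfl⟩ := hlbarAll.1
    obtain ⟨k, hk, hkm⟩ := (hlbar m).1
    have hpos := pos_of_zero_of_lt_succ (hlev0 m) (hlevmono m) hk.1 (by have := hk.2; omega)
    rw [← hkm, one_le_div hpos]
    exact (hlevmono m k hk.2).le
  have hℓ : 0 < lbar1 := by
    obtain ⟨m, hm⟩ := hlbar1.1
    exact hm ▸ pos_of_zero_of_lt_succ (hlev0 m) (hlevmono m) one_pos (by omega)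
  set A := (lbarAll - 1) ^ 2 / (4 * lbarAll)
  set Z := univ.filter (τ · = 0)
  have hfirst : ∀ i ∈ Z, (lev (typeOf i) (τ i + 1) - u i) * (u i - lev (typeOf i) (τ i)) ≤
      (lbar1 - u i) * u i := fun i hi => by
    rw [(mem_filter.1 hi).2, zero_add, hlev0, sub_zero]
    exact mul_le_mul_of_nonneg_right (by linarith [hlbar1.2 ⟨typeOf i, rfl⟩]) (hu i)
  have hlater : ∀ i ∉ Z, (lev (typeOf i) (τ i + 1) - u i) * (u i - lev (typeOf i) (τ i)) ≤
      A * u i ^ 2 := fun i hi =>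
    sub_mul_sub_le_of_div_le (hlev0 _) (hlevmono _) hL (hratio _)
      ⟨Nat.one_le_iff_ne_zero.2 fun h => hi (by simp [Z, h]), hτle i⟩ (hτ i)
  calc _ = ∑ i ∈ Z, (lev (typeOf i) (τ i + 1) - u i) * (u i - lev (typeOf i) (τ i))
        + ∑ i ∈ Zᶜ, (lev (typeOf i) (τ i + 1) - u i) * (u i - lev (typeOf i) (τ i)) :=
        (sum_add_sum_compl _ _).symm
    _ ≤ ∑ i ∈ Z, (lbar1 - u i) * u i + ∑ i ∈ Zᶜ, A * u i ^ 2 :=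
        add_le_add (sum_le_sum hfirst) (sum_le_sum fun i hi => hlater i (mem_compl.1 hi))
    _ ≤ _ := by
        have hA : 0 ≤ A := by positivity
        have hS := sum_add_sum_compl Z fun i => u i ^ 2
        have hZ := sum_sub_mul_le_of_sum_pow_eq_one Z hu hq hsum hℓ
        rw [← mul_sum]
        nlinarith [sum_nonneg fun i (_ : i ∈ Z) => sq_nonneg (u i)]

theorem layerwise_quantization_variance_bound_general
    {d M : ℕ} (q : ℕ) (hq : 1 ≤ q)
    (v : Fin d → ℝ) (hv : v ≠ 0)
    (typeOf : Fin d → Fin M)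
    (α : Fin M → ℕ)
    (lev : Fin M → ℕ → ℝ)
    (hlev0 : ∀ m, lev m 0 = 0)
    (hlevmono : ∀ m, ∀ j ≤ α m, lev m j < lev m (j + 1))
    (u : Fin d → ℝ)
    (hu : ∀ i, u i = |v i| / (∑ j, |v j| ^ q) ^ ((1 : ℝ) / q))
    (τ : Fin d → ℕ)
    (hτle : ∀ i, τ i ≤ α (typeOf i))
    (hτ : ∀ i, lev (typeOf i) (τ i) ≤ u i ∧ u i ≤ lev (typeOf i) (τ i + 1))
    (lbar : Fin M → ℝ)
    (hlbar : ∀ m, IsGreatest ((fun j => lev m (j + 1) / lev m j) '' Set.Icc 1 (α m)) (lbar m))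
    (lbarAll lbar1 : ℝ)
    (hlbarAll : IsGreatest (Set.range lbar) lbarAll)
    (hlbar1 : IsGreatest (Set.range fun m => lev m 1) lbar1)
    (dth εQ : ℝ)
    (hdth : dth = (2 / lbar1) ^ (min 2 q))
    (hεQ : εQ = (lbarAll - 1) ^ 2 / (4 * lbarAll)
        + (lbar1 * (d : ℝ) ^ ((1 : ℝ) / ((min q 2 : ℕ) : ℝ)) - 1)
            * (if dth ≤ (d : ℝ) then 1 else 0)
        + (lbar1 ^ 2 / 4) * (d : ℝ) ^ ((2 : ℝ) / ((min q 2 : ℕ) : ℝ))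
            * (if (d : ℝ) < dth then 1 else 0)) :
    ((∑ j, |v j| ^ q) ^ ((1 : ℝ) / q)) ^ 2
        * ∑ i, (lev (typeOf i) (τ i + 1) - u i) * (u i - lev (typeOf i) (τ i))
      ≤ εQ * ∑ i, v i ^ 2 := by
  obtain ⟨hN, hsum⟩ := rpow_pos_and_sum_div_pow_eq_one hv (q := q) (by omega)
  set N := (∑ j, |v j| ^ q) ^ ((1 : ℝ) / q)
  obtain rfl : u = fun i => |v i| / N := funext hu
  have hbound := sum_cell_errors_le (fun i => by positivity) hq hsum typeOf α lev hlev0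
    hlevmono τ hτle (fun i => (hτ i).1) hlbar hlbarAll hlbar1
  rw [Fintype.card_fin, ← hdth, ← hεQ] at hbound
  have hv2 : ∑ i, v i ^ 2 = N ^ 2 * ∑ i, (|v i| / N) ^ 2 := by
    rw [mul_sum]; congr! 1 with i; rw [div_pow, mul_div_cancel₀ _ (by positivity), sq_abs]
  rw [hv2, mul_left_comm]
  exact mul_le_mul_of_nonneg_left hbound (sq_nonneg N)

/-- **Variance bound for layer-wise quantization** (deterministic core).
`v : Fin d → ℝ` is a nonzero vector, `typeOf` assigns each coordinate one of `M` types,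
`lev m` is the sequence of quantization levels of type `m` (indexed `0, …, α m + 1`,
with `lev m 0 = 0`, `lev m (α m + 1) = 1`, strictly increasing), `u i = |v i| / ‖v‖_q`
are the normalized coordinates, and `τ i` is the index of the quantization cell of `u i`.
`lbar m` is the maximal ratio of consecutive levels of type `m`, `lbarAll` its maximum
over types, `lbar1` the maximal first level, and `dth = (2/lbar1)^{min 2 q}`. -/
theorem layerwise_quantization_variance_bound
    {d M : ℕ} (hd : 1 ≤ d) (q : ℕ) (hq : 1 ≤ q)
    (v : Fin d → ℝ) (hv : v ≠ 0)
    (typeOf : Fin d → Fin M)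
    (α : Fin M → ℕ) (hα : ∀ m, 1 ≤ α m)
    (lev : Fin M → ℕ → ℝ)
    (hlev0 : ∀ m, lev m 0 = 0)
    (hlevtop : ∀ m, lev m (α m + 1) = 1)
    (hlevmono : ∀ m, ∀ j ≤ α m, lev m j < lev m (j + 1))
    (u : Fin d → ℝ)
    (hu : ∀ i, u i = |v i| / (∑ j, |v j| ^ q) ^ ((1 : ℝ) / q))
    (τ : Fin d → ℕ)
    (hτle : ∀ i, τ i ≤ α (typeOf i))
    (hτ : ∀ i, lev (typeOf i) (τ i) ≤ u i ∧ u i ≤ lev (typeOf i) (τ i + 1))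
    (lbar : Fin M → ℝ)
    (hlbar : ∀ m, IsGreatest ((fun j => lev m (j + 1) / lev m j) '' Set.Icc 1 (α m)) (lbar m))
    (lbarAll lbar1 : ℝ)
    (hlbarAll : IsGreatest (Set.range lbar) lbarAll)
    (hlbar1 : IsGreatest (Set.range fun m => lev m 1) lbar1)
    (dth εQ : ℝ)
    (hdth : dth = (2 / lbar1) ^ (min 2 q))
    (hεQ : εQ = (lbarAll - 1) ^ 2 / (4 * lbarAll)
        + (lbar1 * (d : ℝ) ^ ((1 : ℝ) / ((min q 2 : ℕ) : ℝ)) - 1)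
            * (if dth ≤ (d : ℝ) then 1 else 0)
        + (lbar1 ^ 2 / 4) * (d : ℝ) ^ ((2 : ℝ) / ((min q 2 : ℕ) : ℝ))
            * (if (d : ℝ) < dth then 1 else 0)) :
    ((∑ j, |v j| ^ q) ^ ((1 : ℝ) / q)) ^ 2
        * ∑ i, (lev (typeOf i) (τ i + 1) - u i) * (u i - lev (typeOf i) (τ i))
      ≤ εQ * ∑ i, v i ^ 2 :=
  layerwise_quantization_variance_bound_general q hq v hv typeOf α lev hlev0 hlevmono u hu τ hτle hτ
    lbar hlbar lbarAll lbar1 hlbarAll hlbar1 dth εQ hdth hεQ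
end

section
/- Let B ≥ 0, T ∈ ℕ, s ∈ ℕ, and r ∈ [0,1). Let a_1, …, a_T be non-negative real numbers with a_t ≤ B for every t, and set λ_t = Σ_{i=1}^t a_i for t ≥ 1 and λ_t = 0 for t ≤ 0. Then Σ_{t=1}^T a_t / (1 + λ_{t−s})^r ≤ λ_T^{1−r}/(1−r) + sB. -/
/-!
With `c = s B` we have `λ_t - λ_{t-s} ≤ c`. Put `Φ(x) = min(x, c) + (x - c)₊^{1-r} / (1 - r)`,
the antiderivative of `1` on `[0, c]` and of `(x - c)^{-r}` beyond `c`. On `[λ_{t-1}, λ_t]`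
both slopes are at least `(1 + λ_{t-s})^{-r}`, the first because `1 + λ_{t-s} ≥ 1` and the
second because `x - c ≤ λ_t - c ≤ λ_{t-s}`; hence `a_t / (1 + λ_{t-s})^r ≤ Φ(λ_t) - Φ(λ_{t-1})`.
Telescoping bounds the sum by `Φ(λ_T) ≤ λ_T^{1-r} / (1 - r) + c`.
-/

open Finset

namespace Real

/-- A discrete form of `(v - u) d^{-r} ≤ ∫_u^v x^{-r} dx` for `v ≤ d`. -/
lemma sub_div_rpow_le_rpow_sub_rpow_div {u v d r : ℝ} (hr0 : 0 ≤ r) (hr1 : r < 1)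
    (hu : 0 ≤ u) (huv : u ≤ v) (hvd : v ≤ d) :
    (v - u) / d ^ r ≤ (v ^ (1 - r) - u ^ (1 - r)) / (1 - r) := by
  have h1r : 0 < 1 - r := by linarith
  have hv : 0 ≤ v := hu.trans huv
  rcases hv.eq_or_lt with rfl | hv
  · simp [le_antisymm huv hu]
  have hamgm : u ^ (1 - r) * v ^ r ≤ (1 - r) * u + r * v :=
    geom_mean_le_arith_mean2_weighted h1r.le hr0 hu hv.le (by ring)
  have hvv : v ^ (1 - r) * v ^ r = v := by
    rw [← rpow_add hv]; simp
  have hvr : 0 < v ^ r := rpow_pos_of_pos hv r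
  calc (v - u) / d ^ r ≤ (v - u) / v ^ r :=
        div_le_div_of_nonneg_left (by linarith) hvr (rpow_le_rpow hv.le hvd hr0)
    _ ≤ (v ^ (1 - r) - u ^ (1 - r)) / (1 - r) := by
        rw [div_le_div_iff₀ hvr h1r]
        nlinarith

end Real

section Potential

variable {c r : ℝ}

noncomputable def cappedPotential (c r x : ℝ) : ℝ :=
  min x c + max (x - c) 0 ^ (1 - r) / (1 - r)

lemma min_add_max_sub_zero {α : Type*} [AddCommGroup α] [LinearOrder α] [IsOrderedAddMonoid α]
    (x c : α) : min x c + max (x - c) 0 = x := by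
  rcases le_total x c with h | h
  · rw [min_eq_left h, max_eq_right (sub_nonpos.2 h), add_zero]
  · rw [min_eq_right h, max_eq_left (sub_nonneg.2 h), add_sub_cancel]

lemma cappedPotential_zero (hc : 0 ≤ c) (hr1 : r < 1) : cappedPotential c r 0 = 0 := by
  simp [cappedPotential, hc, Real.zero_rpow (by linarith : 1 - r ≠ 0)]

lemma cappedPotential_le (hc : 0 ≤ c) (hr1 : r < 1) {x : ℝ} (hx : 0 ≤ x) :
    cappedPotential c r x ≤ x ^ (1 - r) / (1 - r) + c := by
  have hmax : max (x - c) 0 ^ (1 - r) ≤ x ^ (1 - r) :=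
    Real.rpow_le_rpow (le_max_right _ _) (max_le (by linarith) hx) (by linarith)
  have := div_le_div_of_nonneg_right hmax (by linarith : 0 ≤ 1 - r)
  unfold cappedPotential
  linarith [min_le_right x c]

lemma sub_div_rpow_le_cappedPotential_sub (hr0 : 0 ≤ r) (hr1 : r < 1) {x y d : ℝ}
    (hxy : x ≤ y) (hd : 1 ≤ d) (hyd : y - c ≤ d) :
    (y - x) / d ^ r ≤ cappedPotential c r y - cappedPotential c r x := by
  have hlow : (min y c - min x c) / d ^ r ≤ min y c - min x c :=
    div_le_self (sub_nonneg.2 (min_le_min_right c hxy)) (Real.one_le_rpow hd hr0)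
  have hhigh : (max (y - c) 0 - max (x - c) 0) / d ^ r
      ≤ (max (y - c) 0 ^ (1 - r) - max (x - c) 0 ^ (1 - r)) / (1 - r) :=
    Real.sub_div_rpow_le_rpow_sub_rpow_div hr0 hr1 (le_max_right _ _)
      (max_le_max_right 0 (by linarith)) (max_le hyd (by linarith))
  have hsplit : y - x = (min y c - min x c) + (max (y - c) 0 - max (x - c) 0) := by
    linarith [min_add_max_sub_zero x c, min_add_max_sub_zero y c]
  calc (y - x) / d ^ r
        = (min y c - min x c) / d ^ r + (max (y - c) 0 - max (x - c) 0) / d ^ r := by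
          rw [hsplit, add_div]
    _ ≤ (min y c - min x c) + (max (y - c) 0 ^ (1 - r) - max (x - c) 0 ^ (1 - r)) / (1 - r) :=
        add_le_add hlow hhigh
    _ = cappedPotential c r y - cappedPotential c r x := by
        unfold cappedPotential; ring

end Potential

lemma sum_Icc_one_le_sub_of_le {M : Type*} [AddCommGroup M] [PartialOrder M]
    [IsOrderedAddMonoid M] {f g : ℕ → M} (h : ∀ n, f (n + 1) ≤ g (n + 1) - g n) (T : ℕ) :
    ∑ t ∈ Icc 1 T, f t ≤ g T - g 0 := by
  induction T with
  | zero => simp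
  | succ n ih =>
    calc ∑ t ∈ Icc 1 (n + 1), f t = ∑ t ∈ Icc 1 n, f t + f (n + 1) :=
          sum_Icc_succ_top (Nat.le_add_left 1 n) f
      _ ≤ (g n - g 0) + (g (n + 1) - g n) := add_le_add ih (h n)
      _ = g (n + 1) - g 0 := by abel

lemma sum_Icc_one_sub_sum_Icc_one_sub_le {a : ℕ → ℝ} {B : ℝ} (hB : 0 ≤ B)
    (haB : ∀ t, a t ≤ B) (t s : ℕ) :
    ∑ i ∈ Icc 1 t, a i - ∑ i ∈ Icc 1 (t - s), a i ≤ s * B := by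
  have hIoc (n : ℕ) : ∑ i ∈ Icc 1 n, a i = ∑ i ∈ Ioc 0 n, a i := by
    rw [← Icc_add_one_left_eq_Ioc, zero_add]
  have hcard : ((Ioc (t - s) t).card : ℝ) ≤ s := by
    rw [Nat.card_Ioc]; exact_mod_cast (by omega : t - (t - s) ≤ s)
  calc ∑ i ∈ Icc 1 t, a i - ∑ i ∈ Icc 1 (t - s), a i = ∑ i ∈ Ioc (t - s) t, a i := by
        rw [hIoc, hIoc, ← sum_Ioc_consecutive a (Nat.zero_le (t - s)) (Nat.sub_le t s),
          add_sub_cancel_left]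
    _ ≤ (Ioc (t - s) t).card * B :=
        (sum_le_card_nsmul _ _ B fun i _ => haB i).trans_eq (nsmul_eq_mul _ _)
    _ ≤ s * B := mul_le_mul_of_nonneg_right hcard hB

/-- **Summation bound.** For non-negative `a_t ≤ B`, `λ_t = Σ_{i=1}^t a_i` (and `λ_t = 0`
for `t ≤ 0`), `s ∈ ℕ`, and `r ∈ [0,1)`:
`Σ_{t=1}^T a_t/(1+λ_{t−s})^r ≤ λ_T^{1−r}/(1−r) + sB`. -/
theorem summation_shift_bound
    (B : ℝ) (hB : 0 ≤ B) (T s : ℕ) (r : ℝ) (hr0 : 0 ≤ r) (hr1 : r < 1)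
    (a : ℕ → ℝ) (ha : ∀ t, 0 ≤ a t) (haB : ∀ t, a t ≤ B)
    (lam : ℤ → ℝ)
    (hlam_neg : ∀ t : ℤ, t ≤ 0 → lam t = 0)
    (hlam : ∀ t : ℕ, 1 ≤ t → lam (t : ℤ) = ∑ i ∈ Finset.Icc 1 t, a i) :
    ∑ t ∈ Finset.Icc 1 T, a t / (1 + lam ((t : ℤ) - (s : ℤ))) ^ r
      ≤ lam (T : ℤ) ^ (1 - r) / (1 - r) + (s : ℝ) * B := by
  set L : ℕ → ℝ := fun t => ∑ i ∈ Icc 1 t, a i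
  have hc : 0 ≤ (s : ℝ) * B := mul_nonneg s.cast_nonneg hB
  have hL_nonneg (t : ℕ) : 0 ≤ L t := sum_nonneg fun i _ => ha i
  have hL_zero : L 0 = 0 := by simp [L]
  have hlam_eq (n : ℕ) : lam n = L n := by
    rcases Nat.eq_zero_or_pos n with rfl | hn
    · rw [hL_zero]; exact hlam_neg 0 le_rfl
    · exact hlam n hn
  have hlam_lag (t : ℕ) : lam ((t : ℤ) - s) = L (t - s) := by
    rcases le_or_gt t s with h | h
    · rw [hlam_neg _ (by omega), Nat.sub_eq_zero_of_le h, hL_zero]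
    · rw [← hlam_eq, Nat.cast_sub h.le]
  have hstep (n : ℕ) : a (n + 1) / (1 + L (n + 1 - s)) ^ r
      ≤ cappedPotential (s * B) r (L (n + 1)) - cappedPotential (s * B) r (L n) := by
    have hL_succ : L (n + 1) = L n + a (n + 1) := sum_Icc_succ_top (Nat.le_add_left 1 n) a
    calc a (n + 1) / (1 + L (n + 1 - s)) ^ r = (L (n + 1) - L n) / (1 + L (n + 1 - s)) ^ r := by
          rw [hL_succ, add_sub_cancel_left]
      _ ≤ _ := sub_div_rpow_le_cappedPotential_sub hr0 hr1 (by linarith [ha (n + 1)])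
          (by linarith [hL_nonneg (n + 1 - s)])
          (by linarith [sum_Icc_one_sub_sum_Icc_one_sub_le hB haB (n + 1) s])
  calc ∑ t ∈ Icc 1 T, a t / (1 + lam ((t : ℤ) - s)) ^ r
      = ∑ t ∈ Icc 1 T, a t / (1 + L (t - s)) ^ r := sum_congr rfl fun t _ => by rw [hlam_lag]
    _ ≤ cappedPotential (s * B) r (L T) - cappedPotential (s * B) r (L 0) :=
        sum_Icc_one_le_sub_of_le (g := fun t => cappedPotential (s * B) r (L t)) hstep T
    _ ≤ lam T ^ (1 - r) / (1 - r) + s * B := by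
        rw [hL_zero, cappedPotential_zero hc hr1, sub_zero, hlam_eq]
        exact cappedPotential_le hc hr1 (hL_nonneg T)
end

section
/- Consider the ODA iterates in ℝ^d. Then for every p ∈ ℝ^d and every t ≥ 2: ‖X_{t+1} − p‖²/η_{t+1} = ‖X_t − p‖²/η_t − ‖X_t − X_{t+1}‖²/η_t + (1/η_{t+1} − 1/η_t)(‖X₁ − p‖² − ‖X₁ − X_{t+1}‖²) − (2/K)⟨Σ_{k=1}^K V̂_{k,t+1/2}, X_{t+1/2} − p⟩ − (2γ_t/K²)⟨Σ_{k=1}^K V̂_{k,t+1/2}, Σ_{k=1}^K V̂_{k,t−1/2}⟩ + (2/K)⟨Σ_{k=1}^K V̂_{k,t+1/2}, X_t − X_{t+1}⟩. -/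
open scoped RealInnerProductSpace
open Finset

/-- **Optimistic Dual Averaging (ODA) iterates** with `K` nodes.
`Vh k t` stands for the dual vector `V̂_{k,t+1/2}` (so `Vh k 0 = V̂_{k,1/2} = 0`),
`Xh t` stands for the leading state `X_{t+1/2}`, with `X 1 = 0`, `Y 1 = 0`, and updates
`X_{t+1/2} = X_t − (γ_t/K) Σ_k V̂_{k,t−1/2}`, `Y_{t+1} = Y_t − (1/K) Σ_k V̂_{k,t+1/2}`,
`X_{t+1} = X₁ + η_{t+1} Y_{t+1}`. -/
def ODA {E : Type*} [NormedAddCommGroup E] [InnerProductSpace ℝ E]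
    (K : ℕ) (Vh : Fin K → ℕ → E) (γ η : ℕ → ℝ) (X Xh Y : ℕ → E) : Prop :=
  X 1 = 0 ∧ Y 1 = 0 ∧ (∀ k, Vh k 0 = 0) ∧
  (∀ t, 1 ≤ t → Xh t = X t - (γ t / (K : ℝ)) • ∑ k, Vh k (t - 1)) ∧
  (∀ t, 1 ≤ t → Y (t + 1) = Y t - (K : ℝ)⁻¹ • ∑ k, Vh k t) ∧
  (∀ t, 1 ≤ t → X (t + 1) = X 1 + η (t + 1) • Y (t + 1))

/-!
The averaged feedback `g = (1/K) Σ_k V̂_{k,t+1/2}` equals `Y_t − Y_{t+1}`, i.e.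
`(X_t − X₁)/η_t − (X_{t+1} − X₁)/η_{t+1}`. Pairing `g` with `X_{t+1} − p` and expanding both
inner products with the four-point polarization identity
`2⟨x − x₁, x' − p⟩ = ‖x − p‖² + ‖x₁ − x'‖² − ‖x − x'‖² − ‖x₁ − p‖²`
gives the identity with the single term `−2⟨g, X_{t+1} − p⟩`; writing
`X_{t+1} − p = (X_{t+1/2} − p) + γ_t (1/K) Σ_k V̂_{k,t−1/2} − (X_t − X_{t+1})` splits it into
the three inner products of the statement.
-/

section InnerProductSpace

variable {E : Type*} [NormedAddCommGroup E] [InnerProductSpace ℝ E]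

theorem two_mul_inner_sub_sub_eq_norm_sq (x x₁ x' p : E) :
    2 * ⟪x - x₁, x' - p⟫
      = ‖x - p‖ ^ 2 + ‖x₁ - x'‖ ^ 2 - ‖x - x'‖ ^ 2 - ‖x₁ - p‖ ^ 2 := by
  have hx : x - x₁ = (x - p) - (x₁ - p) := by abel
  have hxx' : x - x' = (x - p) - (x' - p) := by abel
  have hx₁x' : x₁ - x' = (x₁ - p) - (x' - p) := by abel
  rw [hx, hxx', hx₁x', norm_sub_sq_real (x - p), norm_sub_sq_real (x₁ - p), inner_sub_left]
  ring

theorem dualAveraging_norm_sub_sq_div_eq (x₁ x x' p : E) (a b : ℝ) :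
    ‖x' - p‖ ^ 2 / b
      = ‖x - p‖ ^ 2 / a - ‖x - x'‖ ^ 2 / a
        + (1 / b - 1 / a) * (‖x₁ - p‖ ^ 2 - ‖x₁ - x'‖ ^ 2)
        - 2 * ⟪a⁻¹ • (x - x₁) - b⁻¹ • (x' - x₁), x' - p⟫ := by
  have hx := two_mul_inner_sub_sub_eq_norm_sq x x₁ x' p
  have hx' := two_mul_inner_sub_sub_eq_norm_sq x' x₁ x' p
  rw [sub_self, norm_zero] at hx'
  rw [inner_sub_left, real_inner_smul_left, real_inner_smul_left]
  linear_combination a⁻¹ * hx - b⁻¹ * hx'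

end InnerProductSpace

namespace ODA

variable {E : Type*} [NormedAddCommGroup E] [InnerProductSpace ℝ E]
  {K : ℕ} {Vh : Fin K → ℕ → E} {γ η : ℕ → ℝ} {X Xh Y : ℕ → E}

theorem dual_eq (hODA : ODA K Vh γ η X Xh Y) {t : ℕ} (ht : 2 ≤ t) (hη : η t ≠ 0) :
    Y t = (η t)⁻¹ • (X t - X 1) := by
  obtain ⟨-, -, -, -, -, hX⟩ := hODA
  obtain ⟨s, rfl⟩ : ∃ s, t = s + 1 := ⟨t - 1, by omega⟩
  rw [hX s (by omega), add_sub_cancel_left, inv_smul_smul₀ hη]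

theorem inv_smul_sum_eq (hODA : ODA K Vh γ η X Xh Y) {t : ℕ} (ht : 2 ≤ t)
    (hη : η t ≠ 0) (hη' : η (t + 1) ≠ 0) :
    (K : ℝ)⁻¹ • ∑ k, Vh k t
      = (η t)⁻¹ • (X t - X 1) - (η (t + 1))⁻¹ • (X (t + 1) - X 1) := by
  rw [← hODA.dual_eq ht hη, ← hODA.dual_eq (by omega) hη']
  obtain ⟨-, -, -, -, hY, -⟩ := hODA
  rw [hY t (by omega), sub_sub_cancel]

end ODA

theorem oda_energy_identity_general
    {d K : ℕ}
    (Vh : Fin K → ℕ → EuclideanSpace ℝ (Fin d))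
    (γ η : ℕ → ℝ)
    (X Xh Y : ℕ → EuclideanSpace ℝ (Fin d))
    (hODA : ODA K Vh γ η X Xh Y)
    (hηpos : ∀ t, 1 ≤ t → 0 < η t)
    (p : EuclideanSpace ℝ (Fin d)) (t : ℕ) (ht : 2 ≤ t) :
    ‖X (t + 1) - p‖ ^ 2 / η (t + 1)
      = ‖X t - p‖ ^ 2 / η t - ‖X t - X (t + 1)‖ ^ 2 / η t
        + (1 / η (t + 1) - 1 / η t) * (‖X 1 - p‖ ^ 2 - ‖X 1 - X (t + 1)‖ ^ 2)
        - (2 / (K : ℝ)) * ⟪∑ k, Vh k t, Xh t - p⟫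
        - (2 * γ t / (K : ℝ) ^ 2) * ⟪∑ k, Vh k t, ∑ k, Vh k (t - 1)⟫
        + (2 / (K : ℝ)) * ⟪∑ k, Vh k t, X t - X (t + 1)⟫ := by
  have hg := hODA.inv_smul_sum_eq ht (hηpos t (by omega)).ne' (hηpos (t + 1) (by omega)).ne'
  obtain ⟨-, -, -, hXh, -, -⟩ := hODA
  have hsplit : (2 / (K : ℝ)) * ⟪∑ k, Vh k t, Xh t - p⟫
        + (2 * γ t / (K : ℝ) ^ 2) * ⟪∑ k, Vh k t, ∑ k, Vh k (t - 1)⟫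
        - (2 / (K : ℝ)) * ⟪∑ k, Vh k t, X t - X (t + 1)⟫
      = 2 * ⟪(K : ℝ)⁻¹ • ∑ k, Vh k t, X (t + 1) - p⟫ := by
    rw [hXh t (by omega)]
    simp only [inner_sub_right, real_inner_smul_left, real_inner_smul_right]
    ring
  have henergy := dualAveraging_norm_sub_sq_div_eq (X 1) (X t) (X (t + 1)) p (η t) (η (t + 1))
  rw [← hg] at henergy
  linear_combination henergy + hsplit

/-- **Energy identity** for ODA with positive non-increasing learning rates:
for every `p` and `t ≥ 2`. -/
theorem oda_energy_identity
    {d K : ℕ} (hK : 1 ≤ K)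
    (Vh : Fin K → ℕ → EuclideanSpace ℝ (Fin d))
    (γ η : ℕ → ℝ)
    (X Xh Y : ℕ → EuclideanSpace ℝ (Fin d))
    (hODA : ODA K Vh γ η X Xh Y)
    (hγpos : ∀ t, 1 ≤ t → 0 < γ t) (hηpos : ∀ t, 1 ≤ t → 0 < η t)
    (hγmono : ∀ t, 1 ≤ t → γ (t + 1) ≤ γ t) (hηmono : ∀ t, 1 ≤ t → η (t + 1) ≤ η t)
    (p : EuclideanSpace ℝ (Fin d)) (t : ℕ) (ht : 2 ≤ t) :
    ‖X (t + 1) - p‖ ^ 2 / η (t + 1)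
      = ‖X t - p‖ ^ 2 / η t - ‖X t - X (t + 1)‖ ^ 2 / η t
        + (1 / η (t + 1) - 1 / η t) * (‖X 1 - p‖ ^ 2 - ‖X 1 - X (t + 1)‖ ^ 2)
        - (2 / (K : ℝ)) * ⟪∑ k, Vh k t, Xh t - p⟫
        - (2 * γ t / (K : ℝ) ^ 2) * ⟪∑ k, Vh k t, ∑ k, Vh k (t - 1)⟫
        + (2 / (K : ℝ)) * ⟪∑ k, Vh k t, X t - X (t + 1)⟫ :=
  oda_energy_identity_general Vh γ η X Xh Y hODA hηpos p t ht
end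

section
/- Consider the ODA iterates in ℝ^d with non-increasing learning rates satisfying 0 < η_t ≤ γ_t. Then for every p ∈ ℝ^d and every t ≥ 2: ‖X_{t+1} − p‖²/η_{t+1} ≤ ‖X_t − p‖²/η_t + (1/η_{t+1} − 1/η_t)‖X₁ − p‖² − (2/K)⟨Σ_{k=1}^K V̂_{k,t+1/2}, X_{t+1/2} − p⟩ − (2γ_t/K²)⟨Σ_{k=1}^K V̂_{k,t+1/2}, Σ_{k=1}^K V̂_{k,t−1/2}⟩ + (η_t/K²)‖Σ_{k=1}^K V̂_{k,t+1/2}‖² + min( (η_t/K²)‖Σ_{k=1}^K V̂_{k,t+1/2}‖² − ‖X_t − X_{t+1}‖²/(2η_t), 0 ). -/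
/-!
Writing `X_t - p = c + η_t Y_t` and `X_{t+1} - p = c + η_{t+1} (Y_t - g)` with `c = X₁ - p` and
`g = (1/K) Σ_k V̂_{k,t+1/2}`, the expansion `‖c + a v‖² / a = ‖c‖² / a + 2⟨c, v⟩ + a ‖v‖²` shows that
the right-hand side without the `min` term exceeds the left-hand side by `(η_t - η_{t+1}) ‖Y_t - g‖² ≥ 0`.
For the `min` term, `X_t - X_{t+1} = (η_t - η_{t+1}) (Y_t - g) + η_t g`, and `‖a + b‖² ≤ 2‖a‖² + 2‖b‖²`
bounds `‖X_t - X_{t+1}‖² / (2η_t)` by that same gap plus `η_t ‖g‖²`.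
-/

open scoped RealInnerProductSpace
open Finset

section DualAveragingStep

variable {E : Type*} [NormedAddCommGroup E] [InnerProductSpace ℝ E]

lemma norm_add_smul_sq_div (c v : E) {a : ℝ} (ha : a ≠ 0) :
    ‖c + a • v‖ ^ 2 / a = ‖c‖ ^ 2 / a + 2 * ⟪c, v⟫ + a * ‖v‖ ^ 2 := by
  rw [norm_add_sq_real, real_inner_smul_right, norm_smul, mul_pow, Real.norm_eq_abs, sq_abs]
  field_simp

lemma norm_smul_add_smul_sq_le (a b : ℝ) (v w : E) :
    ‖a • v + b • w‖ ^ 2 ≤ 2 * a ^ 2 * ‖v‖ ^ 2 + 2 * b ^ 2 * ‖w‖ ^ 2 := by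
  have h := pow_le_pow_left₀ (norm_nonneg _) (norm_add_le (a • v) (b • w)) 2
  have := add_sq_le (a := ‖a • v‖) (b := ‖b • w‖)
  rw [norm_smul, norm_smul, mul_pow, mul_pow, Real.norm_eq_abs, Real.norm_eq_abs, sq_abs,
    sq_abs] at *
  linarith

lemma dualAveraging_energy_step (c u g : E) {η η' : ℝ} (hη' : 0 < η') (hη : η' ≤ η) :
    ‖c + η' • (u - g)‖ ^ 2 / η'
      ≤ ‖c + η • u‖ ^ 2 / η + (1 / η' - 1 / η) * ‖c‖ ^ 2 - 2 * ⟪g, c + η • u⟫ + η * ‖g‖ ^ 2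
        + min (η * ‖g‖ ^ 2 - ‖(c + η • u) - (c + η' • (u - g))‖ ^ 2 / (2 * η)) 0 := by
  have hη₀ : 0 < η := hη'.trans_le hη
  have gap : ‖c + η • u‖ ^ 2 / η + (1 / η' - 1 / η) * ‖c‖ ^ 2 - 2 * ⟪g, c + η • u⟫
        + η * ‖g‖ ^ 2
      = ‖c + η' • (u - g)‖ ^ 2 / η' + (η - η') * ‖u - g‖ ^ 2 := by
    rw [norm_add_smul_sq_div c u hη₀.ne', norm_add_smul_sq_div c (u - g) hη'.ne',
      norm_sub_sq_real, inner_add_right, real_inner_smul_right, inner_sub_right,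
      real_inner_comm g c, real_inner_comm g u]
    field_simp
    ring
  have step_sq : ‖(c + η • u) - (c + η' • (u - g))‖ ^ 2 / (2 * η)
      ≤ (η - η') * ‖u - g‖ ^ 2 + η * ‖g‖ ^ 2 := by
    have hdiff : (c + η • u) - (c + η' • (u - g)) = (η - η') • (u - g) + η • g := by module
    rw [hdiff, div_le_iff₀ (by positivity)]
    have hsq := norm_smul_add_smul_sq_le (η - η') η (u - g) g
    nlinarith [mul_nonneg (mul_nonneg hη'.le (sub_nonneg.2 hη)) (sq_nonneg ‖u - g‖)]
  have hmin : -((η - η') * ‖u - g‖ ^ 2)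
      ≤ min (η * ‖g‖ ^ 2 - ‖(c + η • u) - (c + η' • (u - g))‖ ^ 2 / (2 * η)) 0 :=
    le_min (by linarith) (by nlinarith [sq_nonneg ‖u - g‖])
  linarith

end DualAveragingStep

lemma ODA.X_eq_of_two_le {E : Type*} [NormedAddCommGroup E] [InnerProductSpace ℝ E] {K : ℕ}
    {Vh : Fin K → ℕ → E} {γ η : ℕ → ℝ} {X Xh Y : ℕ → E} (h : ODA K Vh γ η X Xh Y) {t : ℕ}
    (ht : 2 ≤ t) : X t = X 1 + η t • Y t := by
  obtain ⟨s, rfl⟩ : ∃ s, t = s + 1 := ⟨t - 1, by omega⟩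
  exact h.2.2.2.2.2 s (by omega)

theorem oda_energy_inequality_general
    {d K : ℕ}
    (Vh : Fin K → ℕ → EuclideanSpace ℝ (Fin d))
    (γ η : ℕ → ℝ)
    (X Xh Y : ℕ → EuclideanSpace ℝ (Fin d))
    (hODA : ODA K Vh γ η X Xh Y)
    (hηpos : ∀ t, 1 ≤ t → 0 < η t)
    (hηmono : ∀ t, 1 ≤ t → η (t + 1) ≤ η t)
    (p : EuclideanSpace ℝ (Fin d)) (t : ℕ) (ht : 2 ≤ t) :
    ‖X (t + 1) - p‖ ^ 2 / η (t + 1)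
      ≤ ‖X t - p‖ ^ 2 / η t
        + (1 / η (t + 1) - 1 / η t) * ‖X 1 - p‖ ^ 2
        - (2 / (K : ℝ)) * ⟪∑ k, Vh k t, Xh t - p⟫
        - (2 * γ t / (K : ℝ) ^ 2) * ⟪∑ k, Vh k t, ∑ k, Vh k (t - 1)⟫
        + (η t / (K : ℝ) ^ 2) * ‖∑ k, Vh k t‖ ^ 2
        + min ((η t / (K : ℝ) ^ 2) * ‖∑ k, Vh k t‖ ^ 2
            - ‖X t - X (t + 1)‖ ^ 2 / (2 * η t)) 0 := by
  have hXt : X t - p = (X 1 - p) + η t • Y t := by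
    rw [hODA.X_eq_of_two_le ht]; abel
  obtain ⟨-, -, -, hXh, hY, hX⟩ := hODA
  set S := ∑ k, Vh k t
  set g := (K : ℝ)⁻¹ • S
  have hXt' : X (t + 1) - p = (X 1 - p) + η (t + 1) • (Y t - g) := by
    rw [hX t (by omega), hY t (by omega)]; abel
  have hcross : (2 / (K : ℝ)) * ⟪S, Xh t - p⟫ + (2 * γ t / (K : ℝ) ^ 2) * ⟪S, ∑ k, Vh k (t - 1)⟫
      = 2 * ⟪g, X t - p⟫ := by
    rw [hXh t (by omega), sub_right_comm, inner_sub_right, real_inner_smul_right,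
      real_inner_smul_left]
    ring
  have hsq : (η t / (K : ℝ) ^ 2) * ‖S‖ ^ 2 = η t * ‖g‖ ^ 2 := by
    rw [norm_smul, mul_pow, norm_inv, RCLike.norm_natCast, inv_pow]
    ring
  have step := dualAveraging_energy_step (X 1 - p) (Y t) g (hηpos (t + 1) (by omega))
    (hηmono t (by omega))
  rw [← hXt, ← hXt', sub_sub_sub_cancel_right] at step
  rw [hsq]
  linarith

/-- **Energy inequality** for ODA with positive non-increasing learning rates
satisfying `η_t ≤ γ_t`: for every `p` and `t ≥ 2`. -/
theorem oda_energy_inequality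
    {d K : ℕ} (hK : 1 ≤ K)
    (Vh : Fin K → ℕ → EuclideanSpace ℝ (Fin d))
    (γ η : ℕ → ℝ)
    (X Xh Y : ℕ → EuclideanSpace ℝ (Fin d))
    (hODA : ODA K Vh γ η X Xh Y)
    (hγpos : ∀ t, 1 ≤ t → 0 < γ t) (hηpos : ∀ t, 1 ≤ t → 0 < η t)
    (hγmono : ∀ t, 1 ≤ t → γ (t + 1) ≤ γ t) (hηmono : ∀ t, 1 ≤ t → η (t + 1) ≤ η t)
    (hηγ : ∀ t, 1 ≤ t → η t ≤ γ t)
    (p : EuclideanSpace ℝ (Fin d)) (t : ℕ) (ht : 2 ≤ t) :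
    ‖X (t + 1) - p‖ ^ 2 / η (t + 1)
      ≤ ‖X t - p‖ ^ 2 / η t
        + (1 / η (t + 1) - 1 / η t) * ‖X 1 - p‖ ^ 2
        - (2 / (K : ℝ)) * ⟪∑ k, Vh k t, Xh t - p⟫
        - (2 * γ t / (K : ℝ) ^ 2) * ⟪∑ k, Vh k t, ∑ k, Vh k (t - 1)⟫
        + (η t / (K : ℝ) ^ 2) * ‖∑ k, Vh k t‖ ^ 2
        + min ((η t / (K : ℝ) ^ 2) * ‖∑ k, Vh k t‖ ^ 2
            - ‖X t - X (t + 1)‖ ^ 2 / (2 * η t)) 0 :=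
  oda_energy_inequality_general Vh γ η X Xh Y hODA hηpos hηmono p t ht
end
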